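/- Let C be a class of matrices that contains some matrix A which is not a pseudo-copy matrix and some matrix B which is not a pseudo-transfer matrix. Then C contains a matrix having an entry of absolute value at least 2. -/

import Mathlib

/-- The permutation matrix of a permutation `σ`: its `(i, j)` entry is `1` iff `i = σ j`. -/
def permMat {m : ℕ} (σ : Equiv.Perm (Fin m)) : Matrix (Fin m) (Fin m) ℤ :=
  Matrix.of fun i j => if i = σ j then 1 else 0

/-- `extMat A n` is the block-diagonal matrix `diag(A, I_n)`. -/
def extMat {k : ℕ} (A : Matrix (Fin k) (Fin k) ℤ) (n : ℕ) :
    Matrix (Fin (k + n)) (Fin (k + n)) ℤ :=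
  Matrix.reindex finSumFinEquiv finSumFinEquiv
    (Matrix.fromBlocks A 0 0 (1 : Matrix (Fin n) (Fin n) ℤ))

/-- A *class of matrices*: a set of square integer matrices of arbitrary sizes, closed
under conjugation by permutation matrices, extension by identity blocks, containing all
identity matrices, and closed under products of equal-size matrices. -/
structure MatrixClass where
  carrier : ∀ k : ℕ, Set (Matrix (Fin k) (Fin k) ℤ)
  perm_mem : ∀ {k : ℕ} (A : Matrix (Fin k) (Fin k) ℤ), A ∈ carrier k →
    ∀ σ : Equiv.Perm (Fin k), permMat σ * A * permMat σ⁻¹ ∈ carrier k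
  ext_mem : ∀ {k : ℕ} (A : Matrix (Fin k) (Fin k) ℤ), A ∈ carrier k →
    ∀ n : ℕ, 1 ≤ n → extMat A n ∈ carrier (k + n)
  one_mem : ∀ n : ℕ, 1 ≤ n → (1 : Matrix (Fin n) (Fin n) ℤ) ∈ carrier n
  mul_mem : ∀ {k : ℕ} (A B : Matrix (Fin k) (Fin k) ℤ),
    A ∈ carrier k → B ∈ carrier k → A * B ∈ carrier k

/-- A square integer matrix is a *pseudo-transfer* matrix if all its entries lie in
`{-1, 0, 1}` and each of its columns contains at most one nonzero entry. -/
def IsPseudoTransfer {k : ℕ} (A : Matrix (Fin k) (Fin k) ℤ) : Prop :=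
  (∀ i j, A i j = -1 ∨ A i j = 0 ∨ A i j = 1) ∧
  ∀ j i₁ i₂, A i₁ j ≠ 0 → A i₂ j ≠ 0 → i₁ = i₂

/-- A square integer matrix is a *pseudo-copy* matrix if all its entries lie in
`{-1, 0, 1}` and each of its rows contains at most one nonzero entry. -/
def IsPseudoCopy {k : ℕ} (A : Matrix (Fin k) (Fin k) ℤ) : Prop :=
  (∀ i j, A i j = -1 ∨ A i j = 0 ∨ A i j = 1) ∧
  ∀ i j₁ j₂, A i j₁ ≠ 0 → A i j₂ ≠ 0 → j₁ = j₂

/-! If a member of the class has an entry of absolute value at least 2 there is nothing to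
prove; otherwise `A` has a row and `B` a column containing two entries `±1`. Two members
`X`, `Y` can be glued along index pairs `q₁ ≠ q₂` and `p₁ ≠ p₂`: extend both by identity blocks
and conjugate the extension of `Y` by a permutation matching `q₁, q₂` with `p₁, p₂` and moving
the other indices of `X` into the identity block of `Y`. The product then has the entries
`X r q₁ * Y p₁ c + X r q₂ * Y p₂ c`. Gluing `A` to `diag(A, A)` squares the two units of its
row, gluing `diag(B, B)` to `B` squares those of the column, and gluing the two results
produces the entry `1 * 1 + 1 * 1 = 2`. -/

open Matrix Function

lemma permMat_eq_toMatrix {k : ℕ} (σ : Equiv.Perm (Fin k)) :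
    permMat σ = σ⁻¹.toPEquiv.toMatrix := by
  ext i j
  simp [permMat, PEquiv.toMatrix_apply, Equiv.eq_symm_apply, eq_comm]

lemma permMat_mul_mul_permMat_inv {k : ℕ} (σ : Equiv.Perm (Fin k))
    (A : Matrix (Fin k) (Fin k) ℤ) : permMat σ * A * permMat σ⁻¹ = reindex σ σ A := by
  rw [permMat_eq_toMatrix, permMat_eq_toMatrix, PEquiv.toMatrix_toPEquiv_mul,
    PEquiv.mul_toMatrix_toPEquiv]
  rfl

namespace MatrixClass

variable (C : MatrixClass)

lemma reindex_mem {k : ℕ} {A : Matrix (Fin k) (Fin k) ℤ} (hA : A ∈ C.carrier k)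
    (σ : Equiv.Perm (Fin k)) : reindex σ σ A ∈ C.carrier k := by
  rw [← permMat_mul_mul_permMat_inv]
  exact C.perm_mem A hA σ

/-- `M` belongs to `C` once its index type is relabelled by some `Fin k`; this lets block
constructions use sum types instead of arithmetic on `Fin`. -/
def MemReindex {ι : Type*} (M : Matrix ι ι ℤ) : Prop :=
  ∃ (k : ℕ) (e : ι ≃ Fin k), reindex e e M ∈ C.carrier k

variable {C}

lemma memReindex_of_mem {k : ℕ} {A : Matrix (Fin k) (Fin k) ℤ} (hA : A ∈ C.carrier k) :
    C.MemReindex A :=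
  ⟨k, Equiv.refl _, by rwa [reindex_refl_refl]⟩

namespace MemReindex

variable {ι κ : Type*} {M N : Matrix ι ι ℤ}

lemma reindex (hM : C.MemReindex M) (f : ι ≃ κ) : C.MemReindex (reindex f f M) := by
  obtain ⟨k, e, h⟩ := hM
  refine ⟨k, f.symm.trans e, ?_⟩
  convert h using 2
  ext i j
  simp

lemma mul [Fintype ι] (hM : C.MemReindex M) (hN : C.MemReindex N) : C.MemReindex (M * N) := by
  obtain ⟨k, e, hMk⟩ := hM
  obtain ⟨l, e', hNl⟩ := hN
  obtain rfl : k = l := by simpa using Fintype.card_congr (e.symm.trans e')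
  refine ⟨k, e, ?_⟩
  rw [Matrix.reindex_apply, ← Matrix.submatrix_mul_equiv _ _ _ e.symm]
  convert C.mul_mem _ _ hMk (C.reindex_mem hNl (e'.symm.trans e)) using 2 <;>
    ext i j <;> simp

lemma fromBlocks_one [Fintype κ] [DecidableEq κ] (hM : C.MemReindex M) :
    C.MemReindex (fromBlocks M 0 0 (1 : Matrix κ κ ℤ)) := by
  rcases isEmpty_or_nonempty κ with hκ | hκ
  · convert hM.reindex (Equiv.sumEmpty ι κ).symm using 1
    ext (i | i) (j | j) <;> first | rfl | exact isEmptyElim i | exact isEmptyElim j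
  obtain ⟨k, e, h⟩ := hM
  refine ⟨k + Fintype.card κ, (e.sumCongr (Fintype.equivFin κ)).trans finSumFinEquiv, ?_⟩
  convert C.ext_mem _ h _ (Fintype.card_pos_iff.mpr hκ) using 1
  rw [extMat, ← Matrix.reindex_trans, Equiv.trans_apply]
  congr 1
  ext (i | i) (j | j) <;> simp [one_apply]

lemma fromBlocks [Fintype ι] [DecidableEq ι] [Fintype κ] [DecidableEq κ] {N : Matrix κ κ ℤ}
    (hM : C.MemReindex M) (hN : C.MemReindex N) : C.MemReindex (fromBlocks M 0 0 N) := by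
  have hN' := (hN.fromBlocks_one (κ := ι)).reindex (Equiv.sumComm κ ι)
  rw [Matrix.reindex_apply, Equiv.sumComm_symm, Equiv.sumComm_apply,
    fromBlocks_submatrix_sum_swap_sum_swap] at hN'
  simpa [fromBlocks_multiply] using hM.fromBlocks_one.mul hN'

variable [Fintype ι] [DecidableEq ι] [Fintype κ] [DecidableEq κ]

lemma exists_apply_eq_mul_add_mul {X : Matrix ι ι ℤ} {Y : Matrix κ κ ℤ}
    (hX : C.MemReindex X) (hY : C.MemReindex Y) {q₁ q₂ : ι} (hq : q₁ ≠ q₂) {p₁ p₂ : κ}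
    (hp : p₁ ≠ p₂) :
    ∃ Z : Matrix (ι ⊕ κ) (ι ⊕ κ) ℤ, C.MemReindex Z ∧ ∃ j : κ → ι ⊕ κ, Injective j ∧
      ∀ r c, Z (.inl r) (j c) = X r q₁ * Y p₁ c + X r q₂ * Y p₂ c := by
  -- `τ` matches `q₁, q₂` with `p₁, p₂` and sends every other index of `X` into the identity
  -- block of `Y`, so only two terms of the row of `X` survive in the product.
  set τ : ι ⊕ κ ≃ κ ⊕ ι := (Equiv.sumComm ι κ).trans
    ((Equiv.swap (.inr q₁) (.inl p₁)).trans (Equiv.swap (.inr q₂) (.inl p₂)))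
  have hτ₁ : τ (.inl q₁) = .inl p₁ := by
    simp [τ, Equiv.swap_apply_of_ne_of_ne, hp]
  have hτ₂ : τ (.inl q₂) = .inl p₂ := by
    simp [τ, Equiv.swap_apply_of_ne_of_ne, hq.symm]
  have hτ : ∀ a, a ≠ q₁ → a ≠ q₂ → τ (.inl a) = .inr a := by
    intro a h₁ h₂
    simp [τ, Equiv.swap_apply_of_ne_of_ne, h₁, h₂]
  refine ⟨Matrix.fromBlocks X 0 0 1 * Matrix.reindex τ.symm τ.symm (Matrix.fromBlocks Y 0 0 1),
    hX.fromBlocks_one.mul (hY.fromBlocks_one.reindex τ.symm), fun c => τ.symm (.inl c),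
    τ.symm.injective.comp Sum.inl_injective, fun r c => ?_⟩
  simp only [mul_apply, reindex_apply, submatrix_apply, Equiv.symm_symm, Equiv.apply_symm_apply,
    Fintype.sum_sum_type, fromBlocks_apply₁₁, fromBlocks_apply₁₂, Matrix.zero_apply, zero_mul,
    Finset.sum_const_zero, add_zero]
  rw [Fintype.sum_eq_add q₁ q₂ hq (fun a ha => by simp [hτ a ha.1 ha.2]), hτ₁, hτ₂]
  simp

lemma exists_row_mul_self {X : Matrix ι ι ℤ} (hX : C.MemReindex X) (r : ι) {q₁ q₂ : ι}
    (hq : q₁ ≠ q₂) :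
    ∃ Z : Matrix (ι ⊕ (ι ⊕ ι)) (ι ⊕ (ι ⊕ ι)) ℤ, C.MemReindex Z ∧ ∃ i j₁ j₂, j₁ ≠ j₂ ∧
      Z i j₁ = X r q₁ * X r q₁ ∧ Z i j₂ = X r q₂ * X r q₂ := by
  obtain ⟨Z, hZ, j, hj, hZj⟩ :=
    hX.exists_apply_eq_mul_add_mul (hX.fromBlocks hX) hq (Sum.inl_ne_inr (a := r) (b := r))
  exact ⟨Z, hZ, .inl r, j (.inl q₁), j (.inr q₂), hj.ne Sum.inl_ne_inr, by simp [hZj],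
    by simp [hZj]⟩

lemma exists_col_mul_self {Y : Matrix κ κ ℤ} (hY : C.MemReindex Y) (c : κ) {p₁ p₂ : κ}
    (hp : p₁ ≠ p₂) :
    ∃ Z : Matrix ((κ ⊕ κ) ⊕ κ) ((κ ⊕ κ) ⊕ κ) ℤ, C.MemReindex Z ∧ ∃ i₁ i₂ j, i₁ ≠ i₂ ∧
      Z i₁ j = Y p₁ c * Y p₁ c ∧ Z i₂ j = Y p₂ c * Y p₂ c := by
  obtain ⟨Z, hZ, j, -, hZj⟩ :=
    (hY.fromBlocks hY).exists_apply_eq_mul_add_mul hY (Sum.inl_ne_inr (a := c) (b := c)) hp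
  exact ⟨Z, hZ, .inl (.inl p₁), .inl (.inr p₂), j c, by simp, by simp [hZj], by simp [hZj]⟩

end MemReindex

end MatrixClass

lemma exists_two_le_abs_or_isUnit_pair_of_not_isPseudoCopy {k : ℕ}
    {A : Matrix (Fin k) (Fin k) ℤ} (h : ¬ IsPseudoCopy A) :
    (∃ i j, 2 ≤ |A i j|) ∨ ∃ r q₁ q₂, q₁ ≠ q₂ ∧ IsUnit (A r q₁) ∧ IsUnit (A r q₂) := by
  by_contra! H
  have hsmall : ∀ i j, -2 < A i j ∧ A i j < 2 := fun i j => abs_lt.mp (H.1 i j)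
  have hunit : ∀ i j, A i j ≠ 0 → IsUnit (A i j) := fun i j hne => by
    have := hsmall i j
    rw [Int.isUnit_iff]
    omega
  refine h ⟨fun i j => by have := hsmall i j; omega, fun i j₁ j₂ h₁ h₂ => ?_⟩
  by_contra hne
  exact H.2 i j₁ j₂ hne (hunit i j₁ h₁) (hunit i j₂ h₂)

lemma exists_two_le_abs_or_isUnit_pair_of_not_isPseudoTransfer {k : ℕ}
    {A : Matrix (Fin k) (Fin k) ℤ} (h : ¬ IsPseudoTransfer A) :
    (∃ i j, 2 ≤ |A i j|) ∨ ∃ c p₁ p₂, p₁ ≠ p₂ ∧ IsUnit (A p₁ c) ∧ IsUnit (A p₂ c) := by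
  have hT : ¬ IsPseudoCopy Aᵀ := fun hT => h ⟨fun i j => hT.1 j i, hT.2⟩
  rcases exists_two_le_abs_or_isUnit_pair_of_not_isPseudoCopy hT with ⟨i, j, hij⟩ | hpair
  exacts [.inl ⟨j, i, hij⟩, .inr hpair]

theorem class_norm_ge_two (C : MatrixClass)
    (hA : ∃ (k : ℕ) (A : Matrix (Fin k) (Fin k) ℤ), A ∈ C.carrier k ∧ ¬ IsPseudoCopy A)
    (hB : ∃ (k : ℕ) (B : Matrix (Fin k) (Fin k) ℤ), B ∈ C.carrier k ∧ ¬ IsPseudoTransfer B) :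
    ∃ (k : ℕ) (M : Matrix (Fin k) (Fin k) ℤ), M ∈ C.carrier k ∧
      ∃ (i j : Fin k), 2 ≤ |M i j| := by
  obtain ⟨kA, A, hAC, hA⟩ := hA
  obtain ⟨kB, B, hBC, hB⟩ := hB
  rcases exists_two_le_abs_or_isUnit_pair_of_not_isPseudoCopy hA with
    ⟨i, j, h⟩ | ⟨r, q₁, q₂, hq, hx₁, hx₂⟩
  · exact ⟨kA, A, hAC, i, j, h⟩
  rcases exists_two_le_abs_or_isUnit_pair_of_not_isPseudoTransfer hB with
    ⟨i, j, h⟩ | ⟨c, p₁, p₂, hp, hy₁, hy₂⟩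
  · exact ⟨kB, B, hBC, i, j, h⟩
  obtain ⟨X, hX, i, j₁, j₂, hj, hX₁, hX₂⟩ :=
    (MatrixClass.memReindex_of_mem hAC).exists_row_mul_self r hq
  obtain ⟨Y, hY, i₁, i₂, j, hi, hY₁, hY₂⟩ :=
    (MatrixClass.memReindex_of_mem hBC).exists_col_mul_self c hp
  obtain ⟨Z, ⟨n, e, hZ⟩, j', -, hZj⟩ := hX.exists_apply_eq_mul_add_mul hY hj hi
  refine ⟨n, _, hZ, e (.inl i), e (j' j), ?_⟩
  rw [reindex_apply, submatrix_apply, e.symm_apply_apply, e.symm_apply_apply, hZj, hX₁, hX₂,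
    hY₁, hY₂, Int.isUnit_mul_self hx₁, Int.isUnit_mul_self hx₂, Int.isUnit_mul_self hy₁,
    Int.isUnit_mul_self hy₂]
  norm_num
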